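/- Let A be a symmetric n×n matrix, B an n×n matrix, d an n-vector, and define φ(A) = B'(d − A·1) + LowerTri(AB)'·1. If Ã = A ± (J^{ab} + J^{ba}) for distinct indices a ≠ b (where J^{ab} has a single 1 in entry (a,b)), then for every j, (φ(Ã) − φ(A))_j = ∓(B_{bj}·1{a<j} + B_{aj}·1{b<j}). -/

import Mathlib

/-! φ is affine in A, with linear part E ↦ LowerTri(EB)'·1 − B'(E·1). On the matrix unit J^{pq}
this linear part is j ↦ 1{j ≤ p}·B_{qj} − B_{pj}, and adding the contributions of J^{ab} and J^{ba}
turns the non-strict indicators into the strict ones 1{a < j}, 1{b < j}. -/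

open Matrix Finset

def lowerTri {n : ℕ} (M : Matrix (Fin n) (Fin n) ℝ) : Matrix (Fin n) (Fin n) ℝ :=
  fun i j => if j ≤ i then M i j else 0

/-- φ(A) = B'(d − A·1) + LowerTri(AB)'·1 -/
def phi {n : ℕ} (B : Matrix (Fin n) (Fin n) ℝ) (d : Fin n → ℝ)
    (A : Matrix (Fin n) (Fin n) ℝ) : Fin n → ℝ :=
  Bᵀ.mulVec (d - A.mulVec 1) + (lowerTri (A * B))ᵀ.mulVec 1

section

variable {n : ℕ}

lemma lowerTri_add (M N : Matrix (Fin n) (Fin n) ℝ) :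
    lowerTri (M + N) = lowerTri M + lowerTri N := by
  ext i j
  simp only [lowerTri, Matrix.add_apply]
  split_ifs <;> simp

lemma phi_add_sub_phi (B : Matrix (Fin n) (Fin n) ℝ) (d : Fin n → ℝ)
    (A E : Matrix (Fin n) (Fin n) ℝ) :
    phi B d (A + E) - phi B d A = (lowerTri (E * B))ᵀ *ᵥ 1 - Bᵀ *ᵥ (E *ᵥ 1) := by
  simp only [phi, add_mul, lowerTri_add, transpose_add, add_mulVec, sub_add_eq_sub_sub,
    mulVec_sub]
  abel

lemma transpose_mulVec_single_mulVec_one (B : Matrix (Fin n) (Fin n) ℝ) (p q : Fin n) (c : ℝ) :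
    Bᵀ *ᵥ (single p q c *ᵥ 1) = c • B p := by
  rw [single_mulVec_eq, mulVec_smul, mulVec_single_one]
  ext j
  simp

lemma transpose_lowerTri_single_mul_mulVec_one (B : Matrix (Fin n) (Fin n) ℝ) (p q : Fin n)
    (c : ℝ) (j : Fin n) :
    ((lowerTri (single p q c * B))ᵀ *ᵥ 1) j = if j ≤ p then c * B q j else 0 := by
  rw [mulVec_transpose, vecMul, dotProduct, Finset.sum_eq_single p]
  · simp [lowerTri]
  · intro i _ hip
    simp [lowerTri, single_mul_apply_of_ne _ _ _ _ _ hip]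
  · simp

lemma ite_lt_eq_sub_ite_le {α R : Type*} [LinearOrder α] [AddGroup R] (a j : α) (x : R) :
    (if a < j then x else 0) = x - if j ≤ a then x else 0 := by
  by_cases h : j ≤ a
  · simp [h, not_lt.mpr h]
  · simp [h, not_le.mp h]

end

theorem stmt_2_general {n : ℕ} (A B : Matrix (Fin n) (Fin n) ℝ)
    (d : Fin n → ℝ) (a b : Fin n) (ε : ℝ)
    (At : Matrix (Fin n) (Fin n) ℝ)
    (hAt : At = A + ε • (Matrix.single a b (1 : ℝ) + Matrix.single b a 1)) :
    ∀ j : Fin n,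
      (phi B d At - phi B d A) j
        = -ε * ((if a < j then B b j else 0) + (if b < j then B a j else 0)) := by
  intro j
  rw [hAt, smul_add, smul_single, smul_single, phi_add_sub_phi, add_mul, lowerTri_add,
    transpose_add, add_mulVec, add_mulVec, mulVec_add]
  simp only [Pi.sub_apply, Pi.add_apply, transpose_lowerTri_single_mul_mulVec_one,
    transpose_mulVec_single_mulVec_one, Pi.smul_apply, smul_eq_mul, mul_one]
  rw [ite_lt_eq_sub_ite_le a, ite_lt_eq_sub_ite_le b]
  split_ifs <;> ring

theorem stmt_2 {n : ℕ} (A B : Matrix (Fin n) (Fin n) ℝ) (hA : A.IsSymm)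
    (d : Fin n → ℝ) (a b : Fin n) (hab : a ≠ b) (ε : ℝ) (hε : ε = 1 ∨ ε = -1)
    (At : Matrix (Fin n) (Fin n) ℝ)
    (hAt : At = A + ε • (Matrix.single a b (1 : ℝ) + Matrix.single b a 1)) :
    ∀ j : Fin n,
      (phi B d At - phi B d A) j
        = -ε * ((if a < j then B b j else 0) + (if b < j then B a j else 0)) :=
  stmt_2_general A B d a b ε At hAt
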